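/- arXiv:1711.04042 — 4 statements merged into one kernel-verified Lean document; each statement's English description precedes it below -/
import Mathlib

section
/- If X is a countably compact σ-space, Y is a second-countable topological space, and f : X → Y is σ-continuous, then the image f(X) is a compact subset of Y. -/
open Set

/-- A σ-topology on `X`. -/
structure SigmaTopology (X : Type*) where
  opens : Set (Set X)
  empty_mem : ∅ ∈ opens
  univ_mem : Set.univ ∈ opens
  inter_mem : ∀ U V, U ∈ opens → V ∈ opens → U ∩ V ∈ opens
  iUnion_mem : ∀ U : ℕ → Set X, (∀ n, U n ∈ opens) → (⋃ n, U n) ∈ opens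

/-- A σ-space is countably compact if every countable σ-open cover has a finite subcover. -/
def SigmaTopology.CountablyCompact {X : Type*} (τ : SigmaTopology X) : Prop :=
  ∀ U : ℕ → Set X, (∀ n, U n ∈ τ.opens) → (⋃ n, U n) = Set.univ →
    ∃ s : Finset ℕ, (⋃ n ∈ s, U n) = Set.univ

/-- If `X` is a countably compact σ-space, `Y` is a second-countable topological space and
`f : X → Y` is σ-continuous, then `f(X)` is compact in `Y`. -/
theorem image_countablyCompact_isCompact {X Y : Type*} [TopologicalSpace Y]
    [SecondCountableTopology Y] (τ : SigmaTopology X) (hX : τ.CountablyCompact)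
    (f : X → Y) (hf : ∀ V : Set Y, IsOpen V → f ⁻¹' V ∈ τ.opens) :
    IsCompact (f '' Set.univ) := by
  classical
  rw [isCompact_iff_finite_subcover]
  intro ι U hU hcov
  -- get countable subcover via Lindelöf
  have hLin : IsLindelof (f '' Set.univ) := HereditarilyLindelof_LindelofSets _
  obtain ⟨t, htc, htcov⟩ := hLin.elim_countable_subcover U hU hcov
  by_cases ht : t.Nonempty
  · obtain ⟨e, he⟩ := (Set.countable_iff_exists_surjective ht).mp htc
    set V : ℕ → Set X := fun n => f ⁻¹' U (e n) with hV
    have hVopen : ∀ n, V n ∈ τ.opens := fun n => hf _ (hU _)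
    have hVcov : (⋃ n, V n) = Set.univ := by
      ext x
      simp only [mem_iUnion, mem_univ, iff_true]
      have : f x ∈ ⋃ i ∈ t, U i := htcov ⟨x, trivial, rfl⟩
      obtain ⟨i, hit, hxi⟩ := mem_iUnion₂.mp this
      obtain ⟨n, hn⟩ := he ⟨i, hit⟩
      exact ⟨n, by simpa [hV, hn] using hxi⟩
    obtain ⟨s, hs⟩ := hX V hVopen hVcov
    refine ⟨s.image (fun n => (e n : ι)), ?_⟩
    rintro y ⟨x, -, rfl⟩
    have : x ∈ ⋃ n ∈ s, V n := hs ▸ mem_univ x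
    obtain ⟨n, hns, hxn⟩ := mem_iUnion₂.mp this
    exact mem_iUnion₂.mpr ⟨e n, Finset.mem_image_of_mem _ hns, hxn⟩
  · rw [Set.not_nonempty_iff_eq_empty] at ht
    subst ht
    simp only [mem_empty_iff_false, iUnion_of_empty, iUnion_empty] at htcov
    have : ∀ x : X, False := fun x => htcov ⟨x, trivial, rfl⟩
    refine ⟨∅, ?_⟩
    rintro y ⟨x, -, rfl⟩
    exact absurd trivial (by simpa using this x)
end

section
/- Let X be a set and B a Boolean algebra of subsets of X with the property that any countable family of pairwise disjoint nonempty sets in B whose union lies in B is in fact finite. Then every finitely additive probability measure on B extends uniquely to a countably additive probability measure on the σ-algebra generated by B. -/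
open Set MeasureTheory Function
open scoped ENNReal

/-!
By the hypothesis on `B`, a countable disjoint family in `B` whose union lies in `B` has only
finitely many nonempty members, so on `B` countable additivity reduces to finite additivity.
The content `A ↦ μ₀ A` is therefore σ-subadditive and Carathéodory's construction extends it
to `σ(B)`; the extension is unique because `B` is a π-system generating `σ(B)`.
-/

namespace MeasureTheory

variable {α : Type*} {C : Set (Set α)}

theorem finite_setOf_nonempty_of_pairwise_disjoint
    (hfin : ∀ S : Set (Set α), S ⊆ C → S.Countable → S.Pairwise Disjoint →
      (∀ A ∈ S, A.Nonempty) → ⋃₀ S ∈ C → S.Finite)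
    {ι : Type*} [Countable ι] {f : ι → Set α} (hf : ∀ i, f i ∈ C)
    (hd : Pairwise (Disjoint on f)) (hU : ⋃ i, f i ∈ C) :
    {i | (f i).Nonempty}.Finite := by
  have hinj : InjOn f {i | (f i).Nonempty} := by
    intro i hi j _ hij
    by_contra hne
    exact (hd hne).ne_of_mem hi.some_mem (hij ▸ hi.some_mem) rfl
  have hunion : ⋃₀ (f '' {i | (f i).Nonempty}) = ⋃ i, f i := by
    ext x
    simp only [sUnion_image, mem_iUnion, mem_ofPred_eq, exists_prop]
    exact exists_congr fun i ↦ and_iff_right_of_imp fun hx ↦ ⟨x, hx⟩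
  refine Finite.of_finite_image (hfin _ (image_subset_iff.2 fun i _ ↦ hf i)
    ((countable_range f).mono (image_subset_range _ _)) ?_ (forall_mem_image.2 fun _ hi ↦ hi)
    (hunion ▸ hU)) hinj
  rintro _ ⟨i, -, rfl⟩ _ ⟨j, -, rfl⟩ hne
  exact hd (ne_of_apply_ne f hne)

namespace AddContent

variable {G : Type*} [AddCommMonoid G] [TopologicalSpace G]

theorem addContent_iUnion_eq_tsum_of_finite {m : AddContent G C} {ι : Type*} {f : ι → Set α}
    (hfin : {i | (f i).Nonempty}.Finite) (hf : ∀ i, f i ∈ C) (hd : Pairwise (Disjoint on f))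
    (hU : ⋃ i, f i ∈ C) :
    m (⋃ i, f i) = ∑' i, m (f i) := by
  have hempty : ∀ i ∉ hfin.toFinset, f i = ∅ := fun i hi ↦
    not_nonempty_iff_eq_empty.1 (by simpa using hi)
  have hU_eq : ⋃ i, f i = ⋃ i ∈ hfin.toFinset, f i :=
    (iUnion₂_subset_iUnion _ _).antisymm' <| iUnion_subset fun i ↦ by
      by_cases hi : i ∈ hfin.toFinset
      · exact subset_biUnion_of_mem (u := f) hi
      · simp [hempty i hi]
  rw [hU_eq, addContent_biUnion (fun i _ ↦ hf i) (hd.set_pairwise _) (hU_eq ▸ hU),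
    tsum_eq_sum fun i hi ↦ by rw [hempty i hi, addContent_empty]]

theorem isSigmaSubadditive_of_finite_disjoint (hC : IsSetRing C)
    (hfin : ∀ S : Set (Set α), S ⊆ C → S.Countable → S.Pairwise Disjoint →
      (∀ A ∈ S, A.Nonempty) → ⋃₀ S ∈ C → S.Finite)
    (m : AddContent ℝ≥0∞ C) : m.IsSigmaSubadditive :=
  isSigmaSubadditive_of_addContent_iUnion_eq_tsum hC fun _ hf hU hd ↦
    addContent_iUnion_eq_tsum_of_finite
      (finite_setOf_nonempty_of_pairwise_disjoint hfin hf hd hU) hf hd hU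

end AddContent

noncomputable def IsSetRing.ofRealAddContent (hC : IsSetRing C) (μ₀ : Set α → ℝ) (h0 : μ₀ ∅ = 0)
    (hnonneg : ∀ s ∈ C, 0 ≤ μ₀ s)
    (hadd : ∀ s ∈ C, ∀ t ∈ C, Disjoint s t → μ₀ (s ∪ t) = μ₀ s + μ₀ t) :
    AddContent ℝ≥0∞ C :=
  hC.addContent_of_union (fun s ↦ ENNReal.ofReal (μ₀ s)) (by simp [h0]) fun hs ht hst ↦ by
    simp only [hadd _ hs _ ht hst, ENNReal.ofReal_add (hnonneg _ hs) (hnonneg _ ht)]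

end MeasureTheory

theorem extend_finitelyAdditive_of_no_infinite_disjoint_general {X : Type*} (B : Set (Set X))
    (hempty : ∅ ∈ B) (hcompl : ∀ A ∈ B, Aᶜ ∈ B) (hunion : ∀ A ∈ B, ∀ A' ∈ B, A ∪ A' ∈ B)
    (hfin : ∀ S : Set (Set X), S ⊆ B → S.Countable → S.Pairwise Disjoint →
      (∀ A ∈ S, A.Nonempty) → ⋃₀ S ∈ B → S.Finite)
    (μ₀ : Set X → ℝ) (hnonneg : ∀ A ∈ B, 0 ≤ μ₀ A) (hone : μ₀ Set.univ = 1)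
    (hadd : ∀ A ∈ B, ∀ A' ∈ B, Disjoint A A' → μ₀ (A ∪ A') = μ₀ A + μ₀ A') :
    ∃! μ : @Measure X (MeasurableSpace.generateFrom B),
      (@IsProbabilityMeasure X (MeasurableSpace.generateFrom B) μ ∧
        ∀ A ∈ B, μ A = ENNReal.ofReal (μ₀ A)) := by
  let _ : MeasurableSpace X := MeasurableSpace.generateFrom B
  have hB : IsSetAlgebra B := ⟨hempty, fun s hs ↦ hcompl s hs, fun s t hs ht ↦ hunion s hs t ht⟩
  have h0 : μ₀ ∅ = 0 := by simpa using hadd ∅ hempty ∅ hempty (disjoint_empty _)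
  set m := hB.isSetRing.ofRealAddContent μ₀ h0 hnonneg hadd
  set μ := m.measure hB.isSetRing.isSetSemiring le_rfl
    (m.isSigmaSubadditive_of_finite_disjoint hB.isSetRing hfin)
  have hμ : ∀ A ∈ B, μ A = ENNReal.ofReal (μ₀ A) := fun A hA ↦ m.measure_eq _ rfl _ hA
  have hprob : IsProbabilityMeasure μ := ⟨by rw [hμ _ hB.univ_mem, hone, ENNReal.ofReal_one]⟩
  refine ⟨μ, ⟨hprob, hμ⟩, fun ν ⟨_, hνB⟩ ↦ ?_⟩
  exact ext_of_generate_finite B rfl hB.isSetRing.isSetSemiring.isPiSystem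
    (fun A hA ↦ by rw [hνB A hA, hμ A hA]) (by simp only [measure_univ])

/-- Hahn–Kolmogorov extension, specialized: if `B` is a Boolean algebra of subsets of `X`
in which every countable pairwise-disjoint family of nonempty sets whose union lies in `B`
is finite, then every finitely additive probability measure on `B` extends uniquely to a
countably additive probability measure on the σ-algebra generated by `B`. -/
theorem extend_finitelyAdditive_of_no_infinite_disjoint {X : Type*} (B : Set (Set X))
    (hempty : ∅ ∈ B) (hcompl : ∀ A ∈ B, Aᶜ ∈ B) (hunion : ∀ A ∈ B, ∀ A' ∈ B, A ∪ A' ∈ B)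
    (hfin : ∀ S : Set (Set X), S ⊆ B → S.Countable → S.Pairwise Disjoint →
      (∀ A ∈ S, A.Nonempty) → ⋃₀ S ∈ B → S.Finite)
    (μ₀ : Set X → ℝ) (hnonneg : ∀ A ∈ B, 0 ≤ μ₀ A) (hle : ∀ A ∈ B, μ₀ A ≤ 1)
    (hone : μ₀ Set.univ = 1)
    (hadd : ∀ A ∈ B, ∀ A' ∈ B, Disjoint A A' → μ₀ (A ∪ A') = μ₀ A + μ₀ A') :
    ∃! μ : @Measure X (MeasurableSpace.generateFrom B),
      (@IsProbabilityMeasure X (MeasurableSpace.generateFrom B) μ ∧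
        ∀ A ∈ B, μ A = ENNReal.ofReal (μ₀ A)) :=
  extend_finitelyAdditive_of_no_infinite_disjoint_general B hempty hcompl hunion hfin μ₀ hnonneg
    hone hadd
end

section
/- Every Keisler measure on an ω₁-saturated structure M extends to a countably additive probability measure on the σ-algebra generated by the definable subsets of M. -/
open Set FirstOrder MeasureTheory

/-- `M` is ω₁-saturated: every countable, finitely satisfiable family of definable sets
(with parameters from `M`) has nonempty intersection. -/
def OmegaOneSaturated (L : Language) (M : Type*) [L.Structure M] : Prop :=
  ∀ D : ℕ → Set M, (∀ n, (Set.univ : Set M).Definable₁ L (D n)) →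
    (∀ s : Finset ℕ, (⋂ n ∈ s, D n).Nonempty) → (⋂ n, D n).Nonempty

namespace KeislerAux

variable {L : Language} {M : Type*} [L.Structure M]

theorem def1_union {s t : Set M} (hs : (univ : Set M).Definable₁ L s)
    (ht : (univ : Set M).Definable₁ L t) : (univ : Set M).Definable₁ L (s ∪ t) := by
  have h := Set.Definable.union hs ht
  have e : ({x : Fin 1 → M | x 0 ∈ s} ∪ {x : Fin 1 → M | x 0 ∈ t})
      = {x : Fin 1 → M | x 0 ∈ s ∪ t} := by ext x; simp
  unfold Set.Definable₁ at *
  rwa [e] at h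

theorem def1_inter {s t : Set M} (hs : (univ : Set M).Definable₁ L s)
    (ht : (univ : Set M).Definable₁ L t) : (univ : Set M).Definable₁ L (s ∩ t) := by
  have h := Set.Definable.inter hs ht
  have e : ({x : Fin 1 → M | x 0 ∈ s} ∩ {x : Fin 1 → M | x 0 ∈ t})
      = {x : Fin 1 → M | x 0 ∈ s ∩ t} := by ext x; simp
  unfold Set.Definable₁ at *
  rwa [e] at h

theorem def1_compl {s : Set M} (hs : (univ : Set M).Definable₁ L s) :
    (univ : Set M).Definable₁ L sᶜ := by
  have h := Set.Definable.compl hs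
  have e : ({x : Fin 1 → M | x 0 ∈ s})ᶜ = {x : Fin 1 → M | x 0 ∈ sᶜ} := by ext x; simp
  unfold Set.Definable₁ at *
  rwa [e] at h

theorem def1_diff {s t : Set M} (hs : (univ : Set M).Definable₁ L s)
    (ht : (univ : Set M).Definable₁ L t) : (univ : Set M).Definable₁ L (s \ t) :=
  def1_inter hs (def1_compl ht)

theorem def1_empty : (univ : Set M).Definable₁ L (∅ : Set M) := by
  have h := Set.definable_empty (L := L) (A := (univ : Set M)) (α := Fin 1)
  have e : (∅ : Set (Fin 1 → M)) = {x : Fin 1 → M | x 0 ∈ (∅ : Set M)} := by ext x; simp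
  unfold Set.Definable₁
  rwa [e] at h

theorem def1_univ : (univ : Set M).Definable₁ L (univ : Set M) := by
  have h := Set.definable_univ (L := L) (A := (univ : Set M)) (α := Fin 1)
  have e : (univ : Set (Fin 1 → M)) = {x : Fin 1 → M | x 0 ∈ (univ : Set M)} := by ext x; simp
  unfold Set.Definable₁
  rwa [e] at h

theorem def1_biUnion {B : ℕ → Set M} (hB : ∀ n, (univ : Set M).Definable₁ L (B n)) (n : ℕ) :
    (univ : Set M).Definable₁ L (⋃ k ∈ Finset.range n, B k) := by
  induction n with
  | zero => simpa using (def1_empty : (univ : Set M).Definable₁ L ∅)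
  | succ n ih =>
      have : (⋃ k ∈ Finset.range (n + 1), B k)
          = (⋃ k ∈ Finset.range n, B k) ∪ B n := by
        simp [Finset.range_add_one, Set.union_comm]
      rw [this]
      exact def1_union ih (hB n)

end KeislerAux

open KeislerAux

/-- Every Keisler measure (finitely additive probability measure on the definable subsets)
on an ω₁-saturated structure `M` extends to a countably additive probability measure on
the σ-algebra generated by the definable subsets of `M`. -/
theorem keisler_measure_extends {L : Language} {M : Type*} [L.Structure M]
    (hsat : OmegaOneSaturated L M)
    (μ₀ : Set M → ℝ)
    (hnonneg : ∀ A, (Set.univ : Set M).Definable₁ L A → 0 ≤ μ₀ A)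
    (hone : μ₀ Set.univ = 1)
    (hadd : ∀ A A', (Set.univ : Set M).Definable₁ L A → (Set.univ : Set M).Definable₁ L A' →
      Disjoint A A' → μ₀ (A ∪ A') = μ₀ A + μ₀ A') :
    ∃ μ : @Measure M (MeasurableSpace.generateFrom {A | (Set.univ : Set M).Definable₁ L A}),
      @IsProbabilityMeasure M (MeasurableSpace.generateFrom
          {A | (Set.univ : Set M).Definable₁ L A}) μ ∧
        ∀ A, (Set.univ : Set M).Definable₁ L A → μ A = ENNReal.ofReal (μ₀ A) := by
  classical
  set 𝒜 : Set (Set M) := {A | (Set.univ : Set M).Definable₁ L A} with h𝒜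
  -- basic facts about μ₀
  have hempty : μ₀ ∅ = 0 := by
    have := hadd ∅ ∅ def1_empty def1_empty (disjoint_bot_left)
    simp at this
    linarith
  -- monotonicity
  have hmono : ∀ A B : Set M, A ∈ 𝒜 → B ∈ 𝒜 → A ⊆ B → μ₀ A ≤ μ₀ B := by
    intro A B hA hB hAB
    have hd : (Set.univ : Set M).Definable₁ L (B \ A) := def1_diff hB hA
    have : μ₀ (A ∪ B \ A) = μ₀ A + μ₀ (B \ A) :=
      hadd A (B \ A) hA hd disjoint_sdiff_self_right
    rw [Set.union_diff_cancel hAB] at this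
    have := hnonneg (B \ A) hd
    linarith
  -- finite subadditivity
  have hsub2 : ∀ A B : Set M, A ∈ 𝒜 → B ∈ 𝒜 → μ₀ (A ∪ B) ≤ μ₀ A + μ₀ B := by
    intro A B hA hB
    have hd : (Set.univ : Set M).Definable₁ L (B \ A) := def1_diff hB hA
    have h1 : μ₀ (A ∪ B \ A) = μ₀ A + μ₀ (B \ A) :=
      hadd A (B \ A) hA hd disjoint_sdiff_self_right
    rw [Set.union_diff_self] at h1
    have h2 : μ₀ (B \ A) ≤ μ₀ B := hmono _ _ hd hB diff_subset
    linarith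
  have hfinsub : ∀ (B : ℕ → Set M), (∀ n, B n ∈ 𝒜) → ∀ n : ℕ,
      μ₀ (⋃ k ∈ Finset.range n, B k) ≤ ∑ k ∈ Finset.range n, μ₀ (B k) := by
    intro B hB n
    induction n with
    | zero => simp [hempty]
    | succ n ih =>
        have e : (⋃ k ∈ Finset.range (n + 1), B k)
            = (⋃ k ∈ Finset.range n, B k) ∪ B n := by
          simp [Finset.range_add_one, Set.union_comm]
        rw [e, Finset.sum_range_succ]
        have := hsub2 _ _ (def1_biUnion hB n) (hB n)
        linarith
  -- M is nonempty (else μ₀ univ = μ₀ ∅ gives 1 = 0)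
  have hM : Nonempty M := by
    by_contra h
    rw [not_nonempty_iff] at h
    rw [Set.univ_eq_empty_iff.mpr h, hempty] at hone
    norm_num at hone
  -- key compactness consequence of saturation
  have hcompact : ∀ (A : Set M) (B : ℕ → Set M), A ∈ 𝒜 → (∀ n, B n ∈ 𝒜) →
      A ⊆ ⋃ n, B n → ∃ n : ℕ, A ⊆ ⋃ k ∈ Finset.range n, B k := by
    intro A B hA hB hcov
    by_contra h
    push_neg at h
    set D : ℕ → Set M := fun n => A \ ⋃ k ∈ Finset.range (n + 1), B k with hD
    have hDdef : ∀ n, (Set.univ : Set M).Definable₁ L (D n) := fun n =>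
      def1_diff hA (def1_biUnion hB (n + 1))
    have hDne : ∀ n, (D n).Nonempty := by
      intro n
      rcases Set.not_subset.mp (h (n + 1)) with ⟨x, hxA, hxB⟩
      exact ⟨x, hxA, hxB⟩
    have hDanti : Antitone D := by
      intro a b hab
      apply Set.diff_subset_diff_right
      exact Set.biUnion_subset_biUnion_left
        (Finset.coe_subset.mpr (Finset.range_subset_range.mpr (by omega)))
    have hfin : ∀ s : Finset ℕ, (⋂ n ∈ s, D n).Nonempty := by
      intro s
      obtain ⟨x0⟩ := hM
      rcases s.eq_empty_or_nonempty with rfl | hs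
      · simpa using ⟨x0, Set.mem_univ x0⟩
      · obtain ⟨m, hm, hmax⟩ := s.exists_max_image id hs
        obtain ⟨x, hx⟩ := hDne m
        exact ⟨x, Set.mem_biInter fun n hn => hDanti (hmax n hn) hx⟩
    obtain ⟨x, hx⟩ := hsat D hDdef hfin
    simp only [Set.mem_iInter, hD, Set.mem_diff] at hx
    obtain ⟨n, hn⟩ := Set.mem_iUnion.mp (hcov (hx 0).1)
    exact (hx n).2 (Set.mem_biUnion (Finset.mem_range.mpr (by omega)) hn)
  -- the premeasure / outer measure
  set m : Set M → ENNReal := fun A => if A ∈ 𝒜 then ENNReal.ofReal (μ₀ A) else ⊤ with hm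
  have hm_empty : m ∅ = 0 := by
    simp [hm, h𝒜, Set.mem_setOf_eq, (def1_empty : (Set.univ : Set M).Definable₁ L ∅), hempty]
  set ν : OuterMeasure M := OuterMeasure.ofFunction m hm_empty with hν
  -- ν agrees with μ₀ on 𝒜
  have hν_eq : ∀ A ∈ 𝒜, ν A = ENNReal.ofReal (μ₀ A) := by
    intro A hA
    refine le_antisymm ?_ ?_
    · have := OuterMeasure.ofFunction_le (m := m) (m_empty := hm_empty) A
      simpa [hm, hA] using this
    · rw [hν, OuterMeasure.ofFunction_apply]
      refine le_iInf fun t => le_iInf fun ht => ?_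
      by_cases hall : ∀ n, t n ∈ 𝒜
      · obtain ⟨n, hn⟩ := hcompact A t hA hall ht
        calc ENNReal.ofReal (μ₀ A)
            ≤ ENNReal.ofReal (μ₀ (⋃ k ∈ Finset.range n, t k)) := by
              exact ENNReal.ofReal_le_ofReal
                (hmono _ _ hA (def1_biUnion hall n) hn)
          _ ≤ ENNReal.ofReal (∑ k ∈ Finset.range n, μ₀ (t k)) :=
              ENNReal.ofReal_le_ofReal (hfinsub t hall n)
          _ = ∑ k ∈ Finset.range n, ENNReal.ofReal (μ₀ (t k)) :=
              ENNReal.ofReal_sum_of_nonneg fun k _ => hnonneg _ (hall k)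
          _ = ∑ k ∈ Finset.range n, m (t k) := by
              refine Finset.sum_congr rfl fun k _ => ?_
              simp [hm, hall k]
          _ ≤ ∑' k, m (t k) := ENNReal.sum_le_tsum _
      · push_neg at hall
        obtain ⟨n, hn⟩ := hall
        have : m (t n) = ⊤ := by simp [hm, hn]
        calc ENNReal.ofReal (μ₀ A) ≤ ⊤ := le_top
          _ = m (t n) := this.symm
          _ ≤ ∑' k, m (t k) := ENNReal.le_tsum n
  -- definable sets are Carathéodory measurable
  have hcar : ∀ A ∈ 𝒜, MeasurableSet[ν.caratheodory] A := by
    intro A hA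
    refine MeasureTheory.OuterMeasure.ofFunction_caratheodory fun t => ?_
    by_cases ht : t ∈ 𝒜
    · have h1 : t ∩ A ∈ 𝒜 := def1_inter ht hA
      have h2 : t \ A ∈ 𝒜 := def1_diff ht hA
      have hdisj : Disjoint (t ∩ A) (t \ A) :=
        Set.disjoint_of_subset_left Set.inter_subset_right disjoint_sdiff_self_right
      have he : (t ∩ A) ∪ (t \ A) = t := Set.inter_union_diff t A
      have := hadd (t ∩ A) (t \ A) h1 h2 hdisj
      rw [he] at this
      simp only [hm, h1, h2, ht, if_pos]
      rw [← ENNReal.ofReal_add (hnonneg _ h1) (hnonneg _ h2), ← this]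
    · simp [hm, ht]
  letI msp : MeasurableSpace M := MeasurableSpace.generateFrom 𝒜
  have hle : msp ≤ ν.caratheodory :=
    MeasurableSpace.generateFrom_le hcar
  refine ⟨ν.toMeasure hle, ?_, ?_⟩
  · constructor
    rw [MeasureTheory.toMeasure_apply ν hle MeasurableSet.univ]
    rw [hν_eq Set.univ def1_univ, hone]
    simp
  · intro A hA
    rw [MeasureTheory.toMeasure_apply ν hle
      (MeasurableSpace.measurableSet_generateFrom hA)]
    exact hν_eq A hA
end

section
/- Let f : M → X be a function from an ω₁-saturated structure M (with the σ-topology generated by definable sets) to a Polish locally compact space X. Then f is σ-continuous if and only if for every compact K and open U with K ⊆ U ⊆ X there exists a definable set D with f⁻¹(K) ⊆ D ⊆ f⁻¹(U). -/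
open Set FirstOrder

/-! If `f` is σ-continuous, the σ-open sets `f⁻¹(U)` and `f⁻¹(X \ K)` cover `M`. Saturation is
countable compactness of the σ-topology, so finitely many of their definable pieces already
cover `M`, and the union of the chosen pieces of `f⁻¹(U)` contains `f⁻¹(K)`. Conversely, in a
locally compact second-countable space every open set is a countable union of compact sets,
and the definable sets squeezed between their preimages and `f⁻¹(U)` exhibit `f⁻¹(U)` as
σ-open. -/

namespace Set

variable {L : Language} {M : Type*} [L.Structure M] {A : Set M}

theorem Definable₁.compl {s : Set M} (hs : A.Definable₁ L s) : A.Definable₁ L sᶜ :=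
  Definable.compl hs

theorem Definable₁.union {s t : Set M} (hs : A.Definable₁ L s) (ht : A.Definable₁ L t) :
    A.Definable₁ L (s ∪ t) :=
  Definable.union hs ht

theorem definable₁_biUnion_finset {ι : Type*} {s : ι → Set M} (hs : ∀ i, A.Definable₁ L (s i))
    (t : Finset ι) : A.Definable₁ L (⋃ i ∈ t, s i) := by
  unfold Definable₁
  convert definable_biUnion_finset hs t using 1
  ext x
  simp

end Set

section SigmaTopology

variable {L : Language} {M : Type*} [L.Structure M]

variable (L) in
def IsSigmaOpen (s : Set M) : Prop :=
  ∃ g : ℕ → Set M, (∀ n, (Set.univ : Set M).Definable₁ L (g n)) ∧ s = ⋃ n, g n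

theorem OmegaOneSaturated.exists_finset_biUnion_eq_univ (hsat : OmegaOneSaturated L M)
    {D : ℕ → Set M} (hD : ∀ n, (Set.univ : Set M).Definable₁ L (D n))
    (hcover : ⋃ n, D n = univ) : ∃ s : Finset ℕ, ⋃ n ∈ s, D n = univ := by
  by_contra! hfin
  have hsat_compl : ∀ s : Finset ℕ, (⋂ n ∈ s, (D n)ᶜ).Nonempty := fun s => by
    simpa only [← compl_iUnion₂, nonempty_compl] using hfin s
  obtain ⟨x, hx⟩ := hsat _ (fun n => (hD n).compl) hsat_compl
  rw [← compl_iUnion, hcover, compl_univ] at hx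
  exact hx

theorem OmegaOneSaturated.exists_definable_between (hsat : OmegaOneSaturated L M)
    {P Q : Set M} (hP : IsSigmaOpen L P) (hQ : IsSigmaOpen L Q) (hPQ : P ∪ Q = univ) :
    ∃ D : Set M, (Set.univ : Set M).Definable₁ L D ∧ Qᶜ ⊆ D ∧ D ⊆ P := by
  obtain ⟨g, hg, rfl⟩ := hP
  obtain ⟨h, hh, rfl⟩ := hQ
  obtain ⟨s, hs⟩ := hsat.exists_finset_biUnion_eq_univ (fun n => (hg n).union (hh n))
    (by rw [iUnion_union_distrib, hPQ])
  refine ⟨⋃ n ∈ s, g n, definable₁_biUnion_finset hg s, fun x hx => ?_,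
    iUnion₂_subset fun n _ => subset_iUnion g n⟩
  obtain ⟨n, hn, hxn⟩ := mem_iUnion₂.1 (hs.symm ▸ mem_univ x : x ∈ ⋃ n ∈ s, (g n ∪ h n))
  refine mem_iUnion₂.2 ⟨n, hn, hxn.resolve_right fun hxh => hx ?_⟩
  exact mem_iUnion.2 ⟨n, hxh⟩

theorem isSigmaOpen_preimage_of_definable_between {X : Type*} [TopologicalSpace X]
    {f : M → X} {U : Set X} (hU : IsSigmaCompact U)
    (hbetween : ∀ K, IsCompact K → K ⊆ U →
      ∃ D : Set M, (Set.univ : Set M).Definable₁ L D ∧ f ⁻¹' K ⊆ D ∧ D ⊆ f ⁻¹' U) :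
    IsSigmaOpen L (f ⁻¹' U) := by
  obtain ⟨K, hK, hKU⟩ := hU
  choose D hD hKD hDU using fun n => hbetween (K n) (hK n) (hKU ▸ subset_iUnion K n)
  refine ⟨D, hD, Subset.antisymm ?_ (iUnion_subset hDU)⟩
  rw [← hKU, preimage_iUnion]
  exact iUnion_mono hKD

end SigmaTopology

theorem IsOpen.isSigmaCompact {X : Type*} [TopologicalSpace X] [LocallyCompactSpace X]
    [SecondCountableTopology X] {U : Set X} (hU : IsOpen U) : IsSigmaCompact U :=
  have := hU.locallyCompactSpace
  isSigmaCompact_iff_sigmaCompactSpace.2 inferInstance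

/-- For `f : M → X` with `M` ω₁-saturated and `X` a locally compact Polish space,
σ-continuity of `f` is equivalent to: for every compact `K` and open `U` with `K ⊆ U`
there is a definable set `D` with `f⁻¹(K) ⊆ D ⊆ f⁻¹(U)`. -/
theorem sigmaContinuous_iff_definable_between {L : Language} {M : Type*} [L.Structure M]
    {X : Type*} [TopologicalSpace X] [PolishSpace X] [LocallyCompactSpace X]
    (hsat : OmegaOneSaturated L M) (f : M → X) :
    (∀ U : Set X, IsOpen U →
        ∃ g : ℕ → Set M, (∀ n, (Set.univ : Set M).Definable₁ L (g n)) ∧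
          f ⁻¹' U = ⋃ n, g n) ↔
      (∀ K U : Set X, IsCompact K → IsOpen U → K ⊆ U →
        ∃ D : Set M, (Set.univ : Set M).Definable₁ L D ∧
          f ⁻¹' K ⊆ D ∧ D ⊆ f ⁻¹' U) := by
  refine ⟨fun hcont K U hK hU hKU => ?_, fun hbetween U hU => ?_⟩
  · have hcover : f ⁻¹' U ∪ f ⁻¹' Kᶜ = univ :=
      eq_univ_of_forall fun x => (em (f x ∈ K)).imp (fun hx => hKU hx) id
    obtain ⟨D, hD, hKD, hDU⟩ := hsat.exists_definable_between (hcont U hU)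
      (hcont Kᶜ hK.isClosed.isOpen_compl) hcover
    exact ⟨D, hD, by rwa [preimage_compl, compl_compl] at hKD, hDU⟩
  · exact isSigmaOpen_preimage_of_definable_between hU.isSigmaCompact
      fun K hK hKU => hbetween K U hK hU hKU
end
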